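/- arXiv:1612.04766 — 3 statements merged into one kernel-verified Lean document; each statement's English description precedes it below -/
import Mathlib

section
/- For coprime positive integers a,b>1 and k≥1, the number of nonnegative integers not representable as a nonnegative integer combination of the geometric sequence a^k, a^{k-1}b, ..., b^k equals ((b−1)a^{k+1} − (a−1)b^{k+1} + a − b)/(2(a−b)) when a≠b. -/
/-!
The generators of level `k + 1` are `a` times those of level `k` together with `b ^ (k + 1)`, so
the semigroup `S (k + 1)` is the gluing `a • S k + ℕ • b ^ (k + 1)`. As `b ^ (k + 1) ∈ S k`, its
coefficient can be taken below `a`, and since `b ^ (k + 1)` is invertible modulo `a` every residue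
class modulo `a` contains exactly one multiple `d * b ^ (k + 1)` with `d < a`. In that class the
gaps of `S (k + 1)` are the `⌊d b ^ (k + 1) / a⌋` numbers below `d * b ^ (k + 1)` and the
translates of `a` times the gaps of `S k`. Hence `g (k + 1) = a g k + ∑_{d < a} ⌊d b^(k+1) / a⌋`,
and the floor sum equals `(a - 1)(b ^ (k + 1) - 1) / 2` because multiplication by `b ^ (k + 1)`
permutes the residues modulo `a`. Solving this recurrence from `g 0 = 0` gives the closed form.
-/

open Finset

namespace Nat

theorem eq_of_mul_mod_eq_mul_mod {a N d d' : ℕ} (hcop : Coprime a N) (hd : d < a) (hd' : d' < a)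
    (h : d * N % a = d' * N % a) : d = d' :=
  (ModEq.cancel_right_of_coprime hcop h).eq_of_lt_of_lt hd hd'

theorem image_range_mul_mod {a N : ℕ} (ha : 0 < a) (hcop : Coprime a N) :
    (range a).image (fun d => d * N % a) = range a := by
  refine eq_of_subset_of_card_le (fun r hr => ?_) ?_
  · obtain ⟨d, -, rfl⟩ := mem_image.mp hr
    exact mem_range.mpr (mod_lt _ ha)
  · rw [Finset.card_image_of_injOn fun d hd d' hd' h =>
      eq_of_mul_mod_eq_mul_mod hcop (mem_range.mp hd) (mem_range.mp hd') h]

theorem exists_lt_mul_mod_eq {a N : ℕ} (ha : 0 < a) (hcop : Coprime a N) (n : ℕ) :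
    ∃ d < a, d * N % a = n % a := by
  have := mem_range.mpr (mod_lt n ha)
  rw [← image_range_mul_mod ha hcop] at this
  simpa using this

theorem sum_range_mul_mod {a N : ℕ} (ha : 0 < a) (hcop : Coprime a N) :
    ∑ d ∈ range a, d * N % a = ∑ d ∈ range a, d := by
  conv_rhs => rw [← image_range_mul_mod ha hcop]
  rw [sum_image fun d hd d' hd' h =>
      eq_of_mul_mod_eq_mul_mod hcop (mem_range.mp hd) (mem_range.mp hd') h]

theorem cast_sum_range_mul_div {a N : ℕ} (ha : 0 < a) (hcop : Coprime a N) :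
    (∑ d ∈ range a, d * N / a : ℕ) = ((a : ℚ) - 1) * ((N : ℚ) - 1) / 2 := by
  have hdivmod : a * ∑ d ∈ range a, d * N / a + ∑ d ∈ range a, d * N % a =
      (∑ d ∈ range a, d) * N := by
    rw [mul_sum, ← sum_add_distrib, sum_mul]
    exact sum_congr rfl fun d _ => div_add_mod (d * N) a
  rw [sum_range_mul_mod ha hcop] at hdivmod
  have hgauss := sum_range_id_mul_two a
  generalize ∑ d ∈ range a, d * N / a = Q at hdivmod ⊢
  generalize ∑ d ∈ range a, d = S at hdivmod hgauss
  qify [show 1 ≤ a from ha] at hdivmod hgauss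
  have ha' : (a : ℚ) ≠ 0 := by positivity
  refine mul_left_cancel₀ ha' ?_
  linear_combination hdivmod + ((N : ℚ) - 1) / 2 * hgauss

theorem eq_and_eq_of_mul_mod_add_mul_eq {a N d d' j j' : ℕ} (ha : 0 < a) (hcop : Coprime a N)
    (hd : d < a) (hd' : d' < a) (h : d * N % a + a * j = d' * N % a + a * j') :
    d = d' ∧ j = j' := by
  have hmod := congrArg (· % a) h
  simp only [add_mul_mod_self_left, mod_mod] at hmod
  obtain rfl := eq_of_mul_mod_eq_mul_mod hcop hd hd' hmod
  exact ⟨rfl, Nat.eq_of_mul_eq_mul_left ha (by omega)⟩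

theorem mul_add_mul_eq_mul_mod_add (a m d N : ℕ) :
    a * m + d * N = d * N % a + a * (d * N / a + m) := by
  rw [mul_add, ← add_assoc, mod_add_div, add_comm]

end Nat

def gluing (a N : ℕ) (T : Set ℕ) : Set ℕ := {n | ∃ d < a, ∃ m ∈ T, n = a * m + d * N}

/-- In the residue class of `d * N` modulo `a` (`d < a`), the gaps of `gluing a N T` are the
`d * N / a` numbers below `d * N` and the translates by `d * N` of `a` times the gaps of `T`. -/
def gluingGaps (a N : ℕ) (F : Finset ℕ) : Finset ℕ :=
  (range a).biUnion fun d =>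
    (range (d * N / a) ∪ F.image (d * N / a + ·)).image (d * N % a + a * ·)

section Gluing

variable {a N : ℕ}

theorem mem_gluing_iff (ha : 0 < a) (hcop : Nat.Coprime a N) (T : Set ℕ) {d j : ℕ} (hd : d < a) :
    d * N % a + a * j ∈ gluing a N T ↔ ∃ m ∈ T, j = d * N / a + m := by
  constructor
  · rintro ⟨d', hd', m, hm, h⟩
    rw [Nat.mul_add_mul_eq_mul_mod_add] at h
    obtain ⟨rfl, rfl⟩ := Nat.eq_and_eq_of_mul_mod_add_mul_eq ha hcop hd hd' h
    exact ⟨m, hm, rfl⟩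
  · rintro ⟨m, hm, rfl⟩
    exact ⟨d, hd, m, hm, (Nat.mul_add_mul_eq_mul_mod_add a m d N).symm⟩

theorem mem_gluingGaps_iff (ha : 0 < a) (hcop : Nat.Coprime a N) (F : Finset ℕ) {d j : ℕ}
    (hd : d < a) :
    d * N % a + a * j ∈ gluingGaps a N F ↔ j < d * N / a ∨ ∃ m ∈ F, j = d * N / a + m := by
  simp only [gluingGaps, mem_biUnion, mem_range, mem_image, mem_union]
  constructor
  · rintro ⟨d', hd', j', hj', h⟩
    obtain ⟨rfl, rfl⟩ := Nat.eq_and_eq_of_mul_mod_add_mul_eq ha hcop hd' hd h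
    exact hj'.imp_right fun ⟨m, hm, h⟩ => ⟨m, hm, h.symm⟩
  · intro h
    exact ⟨d, hd, j, h.imp_right fun ⟨m, hm, h⟩ => ⟨m, hm, h.symm⟩, rfl⟩

theorem coe_gluingGaps (ha : 0 < a) (hcop : Nat.Coprime a N) {T : Set ℕ} {F : Finset ℕ}
    (hF : (F : Set ℕ) = Tᶜ) : (gluingGaps a N F : Set ℕ) = (gluing a N T)ᶜ := by
  ext n
  obtain ⟨d, hd, hdn⟩ := Nat.exists_lt_mul_mod_eq ha hcop n
  rw [← Nat.mod_add_div n a, ← hdn, mem_coe, mem_gluingGaps_iff ha hcop F hd, Set.mem_compl_iff,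
    mem_gluing_iff ha hcop T hd]
  simp only [← mem_coe, hF, Set.mem_compl_iff]
  generalize n / a = j, d * N / a = q
  constructor
  · rintro (hj | ⟨m, hm, rfl⟩) ⟨m', hm', h⟩
    · omega
    · exact hm (Nat.add_left_cancel h ▸ hm')
  · intro h
    by_cases hj : j < q
    · exact .inl hj
    · exact .inr ⟨j - q, fun hm => h ⟨j - q, hm, by omega⟩, by omega⟩

theorem card_gluingGaps (ha : 0 < a) (hcop : Nat.Coprime a N) (F : Finset ℕ) :
    #(gluingGaps a N F) = a * #F + ∑ d ∈ range a, d * N / a := by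
  have hfiber (d : ℕ) :
      #((range (d * N / a) ∪ F.image (d * N / a + ·)).image (d * N % a + a * ·)) =
        d * N / a + #F := by
    have hdisj : Disjoint (range (d * N / a)) (F.image (d * N / a + ·)) := by
      simp only [disjoint_left, mem_range, mem_image, not_exists, not_and]
      omega
    rw [card_image_of_injective _ fun j j' h => Nat.eq_of_mul_eq_mul_left ha (by simpa using h),
      card_union_of_disjoint hdisj, card_range, card_image_of_injective _ (add_right_injective _)]
  rw [gluingGaps, card_biUnion, sum_congr rfl fun d _ => hfiber d, sum_add_distrib, sum_const,
    card_range, smul_eq_mul, add_comm]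
  intro d hd d' hd' hne
  simp only [Function.onFun, disjoint_left, mem_image]
  rintro n ⟨j, -, rfl⟩ ⟨j', -, h⟩
  exact hne
    (Nat.eq_and_eq_of_mul_mod_add_mul_eq ha hcop (mem_range.mp hd') (mem_range.mp hd) h).1.symm

theorem coe_closure_singleton_sup_map_mulLeft {S : AddSubmonoid ℕ} (ha : 0 < a) (hN : N ∈ S) :
    ((AddSubmonoid.closure {N} ⊔ S.map (AddMonoidHom.mulLeft a) : AddSubmonoid ℕ) : Set ℕ) =
      gluing a N S := by
  ext n
  simp only [SetLike.mem_coe, AddSubmonoid.mem_sup, AddSubmonoid.mem_closure_singleton,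
    AddSubmonoid.mem_map, AddMonoidHom.coe_mulLeft, smul_eq_mul]
  constructor
  · rintro ⟨_, ⟨e, rfl⟩, _, ⟨m, hm, rfl⟩, rfl⟩
    refine ⟨e % a, Nat.mod_lt e ha, m + e / a * N, add_mem hm (by simpa using nsmul_mem hN _), ?_⟩
    conv_lhs => rw [← Nat.mod_add_div e a]
    ring
  · rintro ⟨d, -, m, hm, rfl⟩
    exact ⟨d * N, ⟨d, rfl⟩, a * m, ⟨m, hm, rfl⟩, add_comm _ _⟩

end Gluing

def geomSemigroup (a b k : ℕ) : AddSubmonoid ℕ :=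
  AddSubmonoid.closure (Set.range fun i : Fin (k + 1) => a ^ (k - i) * b ^ (i : ℕ))

section GeomSemigroup

variable {a b : ℕ}

theorem mem_geomSemigroup_iff {k n : ℕ} :
    n ∈ geomSemigroup a b k ↔
      ∃ c : Fin (k + 1) → ℕ, n = ∑ i, c i * (a ^ (k - i) * b ^ (i : ℕ)) := by
  simp only [geomSemigroup, AddSubmonoid.mem_closure_range_iff_of_fintype, smul_eq_mul]

theorem geomSemigroup_zero : geomSemigroup a b 0 = ⊤ :=
  have : 1 ∈ geomSemigroup a b 0 := AddSubmonoid.subset_closure ⟨0, by simp⟩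
  eq_top_iff.mpr fun n _ => by simpa using nsmul_mem this n

theorem pow_succ_mem_geomSemigroup (k : ℕ) : b ^ (k + 1) ∈ geomSemigroup a b k := by
  have : b ^ k ∈ geomSemigroup a b k := AddSubmonoid.subset_closure ⟨Fin.last k, by simp⟩
  simpa [pow_succ, mul_comm] using nsmul_mem this b

theorem geomSemigroup_succ (k : ℕ) :
    geomSemigroup a b (k + 1) =
      AddSubmonoid.closure {b ^ (k + 1)} ⊔ (geomSemigroup a b k).map (AddMonoidHom.mulLeft a) := by
  have hgen : (fun i : Fin (k + 2) => a ^ (k + 1 - i) * b ^ (i : ℕ)) =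
      Fin.snoc (fun i : Fin (k + 1) => a * (a ^ (k - i) * b ^ (i : ℕ))) (b ^ (k + 1)) := by
    funext i
    refine Fin.lastCases ?_ (fun i => ?_) i
    · simp
    · rw [Fin.snoc_castSucc, Fin.val_castSucc, show k + 1 - i = k - i + 1 by omega, pow_succ]
      ring
  rw [geomSemigroup, geomSemigroup, hgen, Fin.range_snoc, Set.insert_eq,
    AddSubmonoid.closure_union, AddMonoidHom.map_mclosure, ← Set.range_comp]
  rfl

theorem coe_geomSemigroup_succ (ha : 0 < a) (k : ℕ) :
    (geomSemigroup a b (k + 1) : Set ℕ) = gluing a (b ^ (k + 1)) (geomSemigroup a b k) := by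
  rw [geomSemigroup_succ, coe_closure_singleton_sup_map_mulLeft ha (pow_succ_mem_geomSemigroup k)]

def geomGaps (a b : ℕ) : ℕ → Finset ℕ
  | 0 => ∅
  | k + 1 => gluingGaps a (b ^ (k + 1)) (geomGaps a b k)

theorem coe_geomGaps (ha : 0 < a) (hab : Nat.Coprime a b) :
    ∀ k, (geomGaps a b k : Set ℕ) = (geomSemigroup a b k : Set ℕ)ᶜ
  | 0 => by simp [geomGaps, geomSemigroup_zero]
  | k + 1 => by
    rw [geomGaps, coe_geomSemigroup_succ ha,
      coe_gluingGaps ha (hab.pow_right _) (coe_geomGaps ha hab k)]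

theorem card_geomGaps (ha : 0 < a) (hab : Nat.Coprime a b) (hne : a ≠ b) :
    ∀ k, (#(geomGaps a b k) : ℚ) =
      (((b : ℚ) - 1) * (a : ℚ) ^ (k + 1) - ((a : ℚ) - 1) * (b : ℚ) ^ (k + 1) + a - b) /
        (2 * ((a : ℚ) - b))
  | 0 => by simp only [geomGaps, card_empty, Nat.cast_zero, zero_add, pow_one]; ring
  | k + 1 => by
    have hab' : (a : ℚ) - b ≠ 0 := sub_ne_zero.mpr (by exact_mod_cast hne)
    rw [geomGaps, card_gluingGaps ha (hab.pow_right _), Nat.cast_add, Nat.cast_mul,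
      Nat.cast_sum_range_mul_div ha (hab.pow_right _), card_geomGaps ha hab hne k]
    field_simp
    push_cast
    ring

end GeomSemigroup

theorem geometric_genus_general (a b k : ℕ) (ha : 1 < a) (hab : Nat.Coprime a b)
    (hne : a ≠ b)
    (NR : Finset ℕ)
    (hNR : ∀ n : ℕ, n ∈ NR ↔
      ¬ ∃ c : Fin (k + 1) → ℕ, n = ∑ i : Fin (k + 1), c i * (a ^ (k - (i : ℕ)) * b ^ (i : ℕ))) :
    (NR.card : ℚ) =
      (((b : ℚ) - 1) * (a : ℚ) ^ (k + 1) - ((a : ℚ) - 1) * (b : ℚ) ^ (k + 1) + a - b) /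
        (2 * ((a : ℚ) - b)) := by
  have hNR_eq : NR = geomGaps a b k := by
    rw [← coe_inj, coe_geomGaps (by omega) hab]
    ext n
    simp [hNR, mem_geomSemigroup_iff]
  rw [hNR_eq, card_geomGaps (by omega) hab hne]

/-- For coprime `a, b > 1` with `a ≠ b` and `k ≥ 1`, the number of nonnegative integers not
representable by the geometric sequence `a^k, a^{k-1}b, …, b^k` equals
`((b−1)a^{k+1} − (a−1)b^{k+1} + a − b)/(2(a−b))`. -/
theorem geometric_genus (a b k : ℕ) (ha : 1 < a) (hb : 1 < b) (hab : Nat.Coprime a b)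
    (hne : a ≠ b) (hk : 1 ≤ k)
    (NR : Finset ℕ)
    (hNR : ∀ n : ℕ, n ∈ NR ↔
      ¬ ∃ c : Fin (k + 1) → ℕ, n = ∑ i : Fin (k + 1), c i * (a ^ (k - (i : ℕ)) * b ^ (i : ℕ))) :
    (NR.card : ℚ) =
      (((b : ℚ) - 1) * (a : ℚ) ^ (k + 1) - ((a : ℚ) - 1) * (b : ℚ) ^ (k + 1) + a - b) /
        (2 * ((a : ℚ) - b)) :=
  geometric_genus_general a b k ha hab hne NR hNR
end

section
/- Supersymmetric semigroups are compound: if a_0,...,a_k are pairwise coprime positive integers, A=(a_1,...,a_k) and B=(a_0,...,a_{k−1}), then (A,B) is a suitable pair, the compound sequence G(A,B) equals {(a_0···a_k)/a_i : 0≤i≤k}, the genus of the generated semigroup is (1 + k·∏ a_i − Σ_i (∏ a_j)/a_i)/2, and the Frobenius number is k·∏ a_i − Σ_i (∏ a_j)/a_i. -/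
/-!
Put `P = ∏ aᵢ` and `gᵢ = P / aᵢ`, the terms of the compound sequence. Every integer has a
unique normal form `λ P + ∑ cᵢ gᵢ` with `0 ≤ cᵢ < aᵢ`: modulo `aᵢ` the sum reduces to `cᵢ gᵢ`,
since `aᵢ` divides `P` and every `gⱼ` with `j ≠ i`, and `gᵢ` is invertible modulo `aᵢ`. An
integer lies in the semigroup generated by the `gᵢ` exactly when its `λ` is nonnegative. The
Frobenius candidate `F` has normal form `λ = -1`, `cᵢ = aᵢ - 1`, so `n ↦ F - n` exchanges the
semigroup with its complement: `F` is the largest gap, and the gaps fill exactly half of `[0, F]`.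
-/

open Finset

/-- The compound sequence: `g k A B i = b₁⋯bᵢ · aᵢ₊₁⋯a_k` (0-indexed: `A j = a_{j+1}`,
`B j = b_{j+1}`). -/
def compoundSeq (k : ℕ) (A B : ℕ → ℕ) (i : ℕ) : ℕ :=
  (∏ j ∈ Finset.range i, B j) * (∏ j ∈ Finset.Ico i k, A j)

/-- `n : ℤ` is representable as a nonnegative integer combination of `g₀,…,g_k`. -/
def RepZ (k : ℕ) (A B : ℕ → ℕ) (n : ℤ) : Prop :=
  ∃ c : Fin (k + 1) → ℕ, n = ∑ i : Fin (k + 1), (c i : ℤ) * (compoundSeq k A B (i : ℕ) : ℤ)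

open Function

theorem two_mul_card_gaps_of_symmetric {R : ℤ → Prop} {F : ℤ}
    (hsymm : ∀ n, R (F - n) ↔ ¬ R n) (hnonneg : ∀ n, R n → 0 ≤ n)
    (NR : Finset ℕ) (hNR : ∀ n : ℕ, n ∈ NR ↔ ¬ R n) :
    2 * (NR.card : ℤ) = F + 1 := by
  classical
  obtain ⟨N, hN⟩ : ∃ N : ℕ, (N : ℤ) = F + 1 := by
    have := hnonneg _ (by simpa using (hsymm (-1)).2 fun h => by linarith [hnonneg _ h])
    exact ⟨(F + 1).toNat, Int.toNat_of_nonneg this⟩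
  have hgaps : NR = (range N).filter (fun n : ℕ => ¬ R n) := by
    ext n
    rw [mem_filter, mem_range, hNR]
    refine ⟨fun h => ⟨?_, h⟩, And.right⟩
    have := hnonneg _ ((hsymm n).2 h)
    omega
  have hreflect : ((range N).filter (fun n : ℕ => R n)).card =
      ((range N).filter (fun n : ℕ => ¬ R n)).card := by
    refine card_nbij' (N - 1 - ·) (N - 1 - ·) ?_ ?_ ?_ ?_ <;> intro n hn <;>
      simp only [coe_filter, Set.mem_ofPred_eq, mem_range] at hn ⊢
    · have : ((N - 1 - n : ℕ) : ℤ) = F - n := by omega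
      exact ⟨by omega, by rw [this, hsymm]; exact not_not.2 hn.2⟩
    · have : ((N - 1 - n : ℕ) : ℤ) = F - n := by omega
      exact ⟨by omega, by rw [this]; exact (hsymm n).2 hn.2⟩
    all_goals omega
  have := card_filter_add_card_filter_not (s := range N) (fun n : ℕ => R n)
  rw [card_range] at this
  rw [hgaps]
  omega

section Cofactor

variable {ι : Type*} [Fintype ι] [DecidableEq ι] (a : ι → ℕ)

def cofactor (i : ι) : ℕ := ∏ j ∈ univ.erase i, a j

def MemCofactorSemigroup (n : ℤ) : Prop :=
  ∃ c : ι → ℕ, n = ∑ i, (c i : ℤ) * cofactor a i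

def cofactorFrobenius : ℤ :=
  ((Fintype.card ι : ℤ) - 1) * ∏ i, (a i : ℤ) - ∑ i, (cofactor a i : ℤ)

variable {a}

theorem cofactor_mul_self (i : ι) : cofactor a i * a i = ∏ j, a j :=
  prod_erase_mul _ _ (mem_univ i)

theorem dvd_cofactor {i j : ι} (h : i ≠ j) : a i ∣ cofactor a j :=
  dvd_prod_of_mem a (mem_erase.2 ⟨h, mem_univ i⟩)

theorem coprime_cofactor_self (hcop : Pairwise (Nat.Coprime on a)) (i : ι) :
    Nat.Coprime (cofactor a i) (a i) :=
  Nat.Coprime.prod_left fun _ hj => hcop (ne_of_mem_erase hj)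

theorem combination_modEq_cofactor (l : ℤ) (c : ι → ℤ) (i : ι) :
    l * ∏ j, (a j : ℤ) + ∑ j, c j * cofactor a j ≡ c i * cofactor a i [ZMOD a i] := by
  have hP : (a i : ℤ) ∣ ∏ j, (a j : ℤ) := dvd_prod_of_mem _ (mem_univ i)
  have hrest : (a i : ℤ) ∣ ∑ j ∈ univ.erase i, c j * cofactor a j :=
    dvd_sum fun j hj => dvd_mul_of_dvd_right
      (Int.natCast_dvd_natCast.2 (dvd_cofactor (ne_of_mem_erase hj).symm)) _
  calc l * ∏ j, (a j : ℤ) + ∑ j, c j * cofactor a j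
      = c i * cofactor a i + (l * ∏ j, (a j : ℤ) + ∑ j ∈ univ.erase i, c j * cofactor a j) := by
        rw [← add_sum_erase _ _ (mem_univ i)]; ring
    _ ≡ c i * cofactor a i + 0 [ZMOD a i] :=
        .add_left _ (Int.modEq_zero_iff_dvd.2 ((dvd_mul_of_dvd_right hP l).add hrest))
    _ = c i * cofactor a i := add_zero _

theorem memCofactorSemigroup_nonneg {n : ℤ} (h : MemCofactorSemigroup a n) : 0 ≤ n := by
  obtain ⟨c, rfl⟩ := h
  positivity

theorem memCofactorSemigroup_of_nonneg {c : ι → ℤ} (hc : ∀ i, 0 ≤ c i) :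
    MemCofactorSemigroup a (∑ i, c i * cofactor a i) :=
  ⟨fun i => (c i).toNat, by simp only [Int.toNat_of_nonneg (hc _)]⟩

theorem cofactorFrobenius_eq :
    cofactorFrobenius a = -1 * ∏ i, (a i : ℤ) + ∑ i, ((a i : ℤ) - 1) * cofactor a i := by
  have hsum : ∑ i, (a i : ℤ) * cofactor a i = Fintype.card ι * ∏ i, (a i : ℤ) := by
    simp_rw [mul_comm (a _ : ℤ), ← Nat.cast_mul, cofactor_mul_self]
    simp
  rw [cofactorFrobenius]
  simp only [sub_mul, one_mul, sum_sub_distrib, hsum]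
  ring

theorem exists_normal_form (hpos : ∀ i, 0 < a i) (hcop : Pairwise (Nat.Coprime on a))
    (n : ℤ) :
    ∃ (l : ℤ) (c : ι → ℤ), (∀ i, 0 ≤ c i ∧ c i < a i) ∧
      n = l * ∏ i, (a i : ℤ) + ∑ i, c i * cofactor a i := by
  have hsolve (i : ι) : ∃ c : ℤ, (0 ≤ c ∧ c < a i) ∧ c * cofactor a i ≡ n [ZMOD a i] := by
    obtain ⟨u, v, huv⟩ := Nat.isCoprime_iff_coprime.2 (coprime_cofactor_self hcop i)
    have ha : (0 : ℤ) < a i := by exact_mod_cast hpos i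
    refine ⟨n * u % a i, ⟨Int.emod_nonneg _ ha.ne', Int.emod_lt_of_pos _ ha⟩, ?_⟩
    calc n * u % a i * cofactor a i ≡ n * u * cofactor a i [ZMOD a i] :=
          (Int.mod_modEq _ _).mul_right _
      _ = n + a i * (-(n * v)) := by linear_combination n * huv
      _ ≡ n [ZMOD a i] := Int.modEq_add_fac_self
  choose c hc hcn using hsolve
  have hcop' : Pairwise (IsCoprime on fun i => (a i : ℤ)) :=
    fun i j hij => Nat.isCoprime_iff_coprime.2 (hcop hij)
  obtain ⟨l, hl⟩ : ∏ i, (a i : ℤ) ∣ n - ∑ i, c i * cofactor a i :=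
    Fintype.prod_dvd_of_coprime hcop' fun i => Int.modEq_iff_dvd.1 <|
      (by simpa using combination_modEq_cofactor 0 c i : _ ≡ _ [ZMOD a i]).trans (hcn i)
  exact ⟨l, c, hc, by linarith⟩

theorem normal_form_unique (hpos : ∀ i, 0 < a i) (hcop : Pairwise (Nat.Coprime on a))
    {l l' : ℤ} {c c' : ι → ℤ} (hc : ∀ i, 0 ≤ c i ∧ c i < a i)
    (hc' : ∀ i, 0 ≤ c' i ∧ c' i < a i)
    (h : l * ∏ i, (a i : ℤ) + ∑ i, c i * cofactor a i =
      l' * ∏ i, (a i : ℤ) + ∑ i, c' i * cofactor a i) :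
    l = l' ∧ c = c' := by
  have hcc : c = c' := funext fun i => by
    have hmul : c i * cofactor a i ≡ c' i * cofactor a i [ZMOD a i] :=
      (combination_modEq_cofactor l c i).symm.trans (h ▸ combination_modEq_cofactor l' c' i)
    have hmod : c i ≡ c' i [ZMOD a i] := by
      simpa [Int.gcd_natCast_natCast, (coprime_cofactor_self hcop i).symm] using
        hmul.cancel_right_div_gcd (by exact_mod_cast hpos i)
    rw [← Int.emod_eq_of_lt (hc i).1 (hc i).2, ← Int.emod_eq_of_lt (hc' i).1 (hc' i).2]
    exact hmod
  subst hcc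
  have hP : ∏ i, (a i : ℤ) ≠ 0 := prod_ne_zero_iff.2 fun i _ => by exact_mod_cast (hpos i).ne'
  exact ⟨mul_right_cancel₀ hP (by linarith), rfl⟩

theorem memCofactorSemigroup_iff [Nonempty ι]
    (hpos : ∀ i, 0 < a i) (hcop : Pairwise (Nat.Coprime on a))
    {n l : ℤ} {c : ι → ℤ} (hc : ∀ i, 0 ≤ c i ∧ c i < a i)
    (hn : n = l * ∏ i, (a i : ℤ) + ∑ i, c i * cofactor a i) :
    MemCofactorSemigroup a n ↔ 0 ≤ l := by
  have ha (i : ι) : (0 : ℤ) < a i := by exact_mod_cast hpos i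
  have hP (i : ι) : (cofactor a i : ℤ) * a i = ∏ j, (a j : ℤ) := by
    exact_mod_cast cofactor_mul_self i
  constructor
  · rintro ⟨d, hd⟩
    have hsplit : n = (∑ i, (d i : ℤ) / a i) * ∏ i, (a i : ℤ) +
        ∑ i, (d i : ℤ) % a i * cofactor a i := by
      rw [hd, sum_mul, ← sum_add_distrib]
      refine sum_congr rfl fun i _ => ?_
      rw [← hP i]
      linear_combination (-(cofactor a i : ℤ)) * Int.mul_ediv_add_emod (d i : ℤ) (a i)
    obtain ⟨rfl, -⟩ := normal_form_unique hpos hcop hc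
      (fun i => ⟨Int.emod_nonneg _ (ha i).ne', Int.emod_lt_of_pos _ (ha i)⟩)
      (hn.symm.trans hsplit)
    exact sum_nonneg fun i _ => Int.ediv_nonneg (by positivity) (ha i).le
  · intro hl
    obtain ⟨i₀⟩ := ‹Nonempty ι›
    have hshift : n = ∑ i, (c i + if i = i₀ then l * a i₀ else 0) * cofactor a i := by
      simp only [add_mul, sum_add_distrib, ite_mul, zero_mul, sum_ite_eq', mem_univ, if_true]
      rw [hn, mul_assoc, mul_comm (a i₀ : ℤ), hP]
      ring
    rw [hshift]
    exact memCofactorSemigroup_of_nonneg fun i => add_nonneg (hc i).1 (by positivity)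

theorem memCofactorSemigroup_cofactorFrobenius_sub_iff [Nonempty ι]
    (hpos : ∀ i, 0 < a i) (hcop : Pairwise (Nat.Coprime on a)) (n : ℤ) :
    MemCofactorSemigroup a (cofactorFrobenius a - n) ↔ ¬ MemCofactorSemigroup a n := by
  obtain ⟨l, c, hc, hn⟩ := exists_normal_form hpos hcop n
  have hreflect : cofactorFrobenius a - n =
      (-1 - l) * ∏ i, (a i : ℤ) + ∑ i, ((a i : ℤ) - 1 - c i) * cofactor a i := by
    simp only [cofactorFrobenius_eq, hn, sub_mul (_ - 1 : ℤ), sum_sub_distrib]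
    ring
  have hc' (i : ι) : 0 ≤ (a i : ℤ) - 1 - c i ∧ (a i : ℤ) - 1 - c i < a i := by
    constructor <;> linarith [hc i]
  rw [memCofactorSemigroup_iff hpos hcop hc hn, memCofactorSemigroup_iff hpos hcop hc' hreflect]
  omega

theorem not_memCofactorSemigroup_cofactorFrobenius [Nonempty ι]
    (hpos : ∀ i, 0 < a i) (hcop : Pairwise (Nat.Coprime on a)) :
    ¬ MemCofactorSemigroup a (cofactorFrobenius a) := by
  simpa using (memCofactorSemigroup_cofactorFrobenius_sub_iff hpos hcop 0).not.2
    (not_not.2 ⟨0, by simp⟩)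

theorem memCofactorSemigroup_of_cofactorFrobenius_lt [Nonempty ι]
    (hpos : ∀ i, 0 < a i) (hcop : Pairwise (Nat.Coprime on a)) {n : ℤ}
    (h : cofactorFrobenius a < n) : MemCofactorSemigroup a n := by
  by_contra hn
  have := memCofactorSemigroup_nonneg
    ((memCofactorSemigroup_cofactorFrobenius_sub_iff hpos hcop n).2 hn)
  omega

end Cofactor

theorem compoundSeq_succ_mul_self {k i : ℕ} (a : ℕ → ℕ) (hi : i ≤ k) :
    compoundSeq k (fun t => a (t + 1)) a i * a i = ∏ t ∈ range (k + 1), a t := by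
  rw [compoundSeq, prod_Ico_add' a i k 1, range_eq_Ico, range_eq_Ico,
    ← prod_Ico_consecutive a (Nat.zero_le i) (by omega : i ≤ k + 1),
    prod_eq_prod_Ico_succ_bot (by omega : i < k + 1)]
  ring

theorem compoundSeq_succ_eq_cofactor {k : ℕ} {a : ℕ → ℕ} (hpos : ∀ i, i ≤ k → 0 < a i)
    (i : Fin (k + 1)) :
    compoundSeq k (fun t => a (t + 1)) a i = cofactor (fun j : Fin (k + 1) => a j) i := by
  refine Nat.eq_of_mul_eq_mul_right (hpos i (Nat.le_of_lt_succ i.2)) ?_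
  rw [compoundSeq_succ_mul_self a (Nat.le_of_lt_succ i.2), cofactor_mul_self,
    Fin.prod_univ_eq_prod_range]

theorem repZ_succ_eq_memCofactorSemigroup {k : ℕ} {a : ℕ → ℕ} (hpos : ∀ i, i ≤ k → 0 < a i) :
    RepZ k (fun t => a (t + 1)) a = MemCofactorSemigroup (fun j : Fin (k + 1) => a j) := by
  funext n
  simp only [RepZ, MemCofactorSemigroup, compoundSeq_succ_eq_cofactor hpos]

theorem cofactorFrobenius_fin_eq {k : ℕ} {a : ℕ → ℕ} (hpos : ∀ i, i ≤ k → 0 < a i) :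
    cofactorFrobenius (fun j : Fin (k + 1) => a j) = (k : ℤ) * ∏ t ∈ range (k + 1), (a t : ℤ) -
      ∑ i ∈ range (k + 1), (compoundSeq k (fun t => a (t + 1)) a i : ℤ) := by
  rw [cofactorFrobenius, ← Fin.prod_univ_eq_prod_range (fun t => (a t : ℤ)),
    ← Fin.sum_univ_eq_sum_range (fun i => (compoundSeq k (fun t => a (t + 1)) a i : ℤ))]
  simp [compoundSeq_succ_eq_cofactor hpos]

/-- Supersymmetric semigroups are compound: for pairwise coprime positive `a₀,…,a_k`, with
`A = (a₁,…,a_k)` and `B = (a₀,…,a_{k−1})`, the pair `(A,B)` is suitable, the compound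
sequence is `gᵢ = (a₀⋯a_k)/aᵢ`, the genus is `(1 + k·∏aᵢ − Σᵢ(∏aⱼ)/aᵢ)/2`, and the
Frobenius number is `k·∏aᵢ − Σᵢ(∏aⱼ)/aᵢ`. -/
theorem supersymmetric_compound (k : ℕ) (a : ℕ → ℕ)
    (hpos : ∀ i, i ≤ k → 0 < a i)
    (hcop : ∀ i j, i ≤ k → j ≤ k → i ≠ j → Nat.Coprime (a i) (a j))
    (NR : Finset ℕ)
    (hNR : ∀ n : ℕ, n ∈ NR ↔
      ¬ ∃ c : Fin (k + 1) → ℕ,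
        n = ∑ i : Fin (k + 1), c i * compoundSeq k (fun t => a (t + 1)) a (i : ℕ)) :
    -- (A,B) is a suitable pair
    (∀ i j, j ≤ i → i < k → Nat.Coprime (a (i + 1)) (a j)) ∧
    -- gᵢ = (a₀⋯a_k)/aᵢ, expressed multiplicatively
    (∀ i, i ≤ k → compoundSeq k (fun t => a (t + 1)) a i * a i = ∏ t ∈ Finset.range (k + 1), a t) ∧
    -- genus formula
    ((2 * NR.card : ℤ) = 1 + k * (∏ t ∈ Finset.range (k + 1), (a t : ℤ)) -
        ∑ i ∈ Finset.range (k + 1), (compoundSeq k (fun t => a (t + 1)) a i : ℤ)) ∧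
    -- Frobenius number
    (¬ RepZ k (fun t => a (t + 1)) a
        ((k : ℤ) * (∏ t ∈ Finset.range (k + 1), (a t : ℤ)) -
          ∑ i ∈ Finset.range (k + 1), (compoundSeq k (fun t => a (t + 1)) a i : ℤ)) ∧
      ∀ m : ℤ,
        ((k : ℤ) * (∏ t ∈ Finset.range (k + 1), (a t : ℤ)) -
            ∑ i ∈ Finset.range (k + 1), (compoundSeq k (fun t => a (t + 1)) a i : ℤ)) < m →
          RepZ k (fun t => a (t + 1)) a m) := by
  set a' : Fin (k + 1) → ℕ := fun i => a i
  have hpos' (i : Fin (k + 1)) : 0 < a' i := hpos i (Nat.le_of_lt_succ i.2)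
  have hcop' : Pairwise (Nat.Coprime on a') := fun i j hij =>
    hcop i j (Nat.le_of_lt_succ i.2) (Nat.le_of_lt_succ j.2) (Fin.val_ne_of_ne hij)
  have hgaps (n : ℕ) : n ∈ NR ↔ ¬ MemCofactorSemigroup a' n := by
    simp only [hNR, MemCofactorSemigroup, compoundSeq_succ_eq_cofactor hpos]
    norm_cast
  rw [repZ_succ_eq_memCofactorSemigroup hpos, add_sub_assoc, ← cofactorFrobenius_fin_eq hpos]
  refine ⟨fun i j hji hik => hcop (i + 1) j (by omega) (by omega) (by omega),
    fun i hi => compoundSeq_succ_mul_self a hi, ?_,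
    not_memCofactorSemigroup_cofactorFrobenius hpos' hcop',
    fun m => memCofactorSemigroup_of_cofactorFrobenius_lt hpos' hcop'⟩
  rw [two_mul_card_gaps_of_symmetric (memCofactorSemigroup_cofactorFrobenius_sub_iff hpos' hcop')
    (fun _ => memCofactorSemigroup_nonneg) NR hgaps]
  ring
end

section
/- Degree of Sylvester sums as polynomials: for a suitable pair (A,B) of k-tuples, S_m(A,B), viewed as a polynomial in the variables a_1,...,a_k,b_1,...,b_k (given by the Bernoulli-number summation formula), has total degree (m+1)(k+1); in particular every monomial M appearing satisfies km' ≤ deg(M) ≤ (k+1)m' for m'=m+1, and the top-degree coefficient is positive. -/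
/-!
Expanding each product of powers gives `Q = ∑ c(x, y) · a^α(x, y) b^β(x, y)` over the
compositions `∑ xᵢ + ∑ yⱼ = m`. The exponents `α(i)` and `β(i)` of `aᵢ` and `bᵢ` together count
every `x_l` and every `y_l` once and `yᵢ` twice, so the monomial of `(x, y)` has degree
`k·m + ∑ yⱼ ∈ [k·m, (k+1)·m]`. The top degree forces `x = 0`, where the coefficient is
`1 / ∏ (yⱼ + 1)!` (as `B₀ = 1`), and it is attained at `x = 0, y = (m, 0, …, 0)`. Since
`(k+1)·m > 0`, the constant `B_m / m` does not affect the total degree.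
-/

open Finset MvPolynomial

namespace MvPolynomial

variable {σ R : Type*}

theorem prod_X_pow_eq_monomial_equivFunOnFinite [CommSemiring R] [Fintype σ] (e : σ → ℕ) :
    ∏ j, (X j : MvPolynomial σ R) ^ e j = monomial (Finsupp.equivFunOnFinite.symm e) 1 := by
  rw [monomial_eq, C_1, one_mul, Finsupp.prod_fintype _ _ fun _ => pow_zero _]
  rfl

theorem prod_X_inl_pow_mul_X_inr_pow [CommSemiring R] {ι : Type*} [Fintype ι] (e f : ι → ℕ) :
    ∏ i, (X (Sum.inl i) : MvPolynomial (ι ⊕ ι) R) ^ e i * X (Sum.inr i) ^ f i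
      = monomial (Finsupp.equivFunOnFinite.symm (Sum.elim e f)) 1 := by
  rw [prod_mul_distrib, ← prod_X_pow_eq_monomial_equivFunOnFinite, Fintype.prod_sum_type]
  rfl

theorem coeff_sum_monomial [CommSemiring R] [DecidableEq σ] {ι : Type*} (s : Finset ι)
    (D : ι → σ →₀ ℕ) (c : ι → R) (d : σ →₀ ℕ) :
    coeff d (∑ i ∈ s, monomial (D i) (c i)) = ∑ i ∈ s with D i = d, c i := by
  simp only [coeff_sum, coeff_monomial, sum_ite, sum_const_zero, add_zero]

theorem exists_eq_of_mem_support_sum_monomial [CommSemiring R] {ι : Type*} {s : Finset ι}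
    {D : ι → σ →₀ ℕ} {c : ι → R} {d : σ →₀ ℕ}
    (hd : d ∈ (∑ i ∈ s, monomial (D i) (c i)).support) : ∃ i ∈ s, D i = d := by
  classical
  rw [mem_support_iff, coeff_sum_monomial] at hd
  obtain ⟨i, hi⟩ := nonempty_of_sum_ne_zero hd
  exact ⟨i, mem_filter.mp hi⟩

theorem coeff_sum_monomial_pos [CommSemiring R] [PartialOrder R] [IsOrderedCancelAddMonoid R]
    {ι : Type*} {s : Finset ι} {D : ι → σ →₀ ℕ} {c : ι → R} {d : σ →₀ ℕ}
    (hpos : ∀ i ∈ s, D i = d → 0 < c i) (hex : ∃ i ∈ s, D i = d) :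
    0 < coeff d (∑ i ∈ s, monomial (D i) (c i)) := by
  classical
  rw [coeff_sum_monomial]
  obtain ⟨i, hi, hid⟩ := hex
  exact sum_pos (fun j hj => (mem_filter.mp hj).elim (hpos j)) ⟨i, mem_filter.mpr ⟨hi, hid⟩⟩

theorem totalDegree_C_mul_sub_C {K : Type*} [Field K] {p : MvPolynomial σ K} {a : K}
    (ha : a ≠ 0) (b : K) (hp : 0 < p.totalDegree) :
    (C a * p - C b).totalDegree = p.totalDegree := by
  have hap : (C a * p).totalDegree = p.totalDegree := by
    rw [C_mul', totalDegree, support_smul_eq ha, totalDegree]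
  rw [sub_eq_add_neg, totalDegree_add_eq_left_of_totalDegree_lt, hap]
  rwa [totalDegree_neg, totalDegree_C, hap]

end MvPolynomial

namespace Sylvester

variable {k : ℕ} (x : Fin (k + 1) → ℕ) (y : Fin k → ℕ)

/- `aExponent x y i` and `bExponent x y i` are the paper's `α(i+1)` and `β(i+1)`, with `y`
indexed from `0` instead of `1`. -/
def aExponent (i : Fin k) : ℕ :=
  (∑ l ∈ univ.filter (fun l : Fin (k + 1) => (l : ℕ) ≤ (i : ℕ)), x l) +
    ∑ l ∈ univ.filter (fun l : Fin k => (l : ℕ) ≤ (i : ℕ)), y l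

def bExponent (i : Fin k) : ℕ :=
  (∑ l ∈ univ.filter (fun l : Fin (k + 1) => (i : ℕ) < (l : ℕ)), x l) +
    ∑ l ∈ univ.filter (fun l : Fin k => (i : ℕ) ≤ (l : ℕ)), y l

noncomputable def exponent : Fin k ⊕ Fin k →₀ ℕ :=
  Finsupp.equivFunOnFinite.symm (Sum.elim (aExponent x y) (bExponent x y))

noncomputable def coefficient : ℚ :=
  (∏ i, bernoulli (x i) / ((x i).factorial : ℚ)) / ∏ j, ((y j + 1).factorial : ℚ)

theorem aExponent_add_bExponent (i : Fin k) :
    aExponent x y i + bExponent x y i = (∑ l, x l) + (∑ l, y l) + y i := by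
  have hx := sum_filter_add_sum_filter_not univ (fun l : Fin (k + 1) => (l : ℕ) ≤ (i : ℕ)) x
  have hy := sum_filter_add_sum_filter_not univ (fun l : Fin k => (l : ℕ) ≤ (i : ℕ)) y
  have hy' : univ.filter (fun l : Fin k => (i : ℕ) ≤ (l : ℕ))
      = insert i (univ.filter fun l : Fin k => ¬ (l : ℕ) ≤ (i : ℕ)) := by
    ext l
    simp only [mem_filter, mem_univ, true_and, mem_insert, Fin.ext_iff]
    omega
  simp only [not_le] at hx hy hy'
  rw [aExponent, bExponent, hy', sum_insert (by simp)]
  omega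

theorem degree_exponent :
    (exponent x y).sum (fun _ e => e) = k * ((∑ l, x l) + ∑ l, y l) + ∑ l, y l := by
  rw [exponent, Finsupp.equivFunOnFinite_symm_sum, Fintype.sum_sum_type]
  simp only [Sum.elim_inl, Sum.elim_inr, ← sum_add_distrib, aExponent_add_bExponent]
  rw [sum_add_distrib, sum_const, card_univ, Fintype.card_fin, smul_eq_mul]

theorem coefficient_pos (hx : ∑ l, x l = 0) : 0 < coefficient x y := by
  have hnum : ∏ i, bernoulli (x i) / ((x i).factorial : ℚ) = 1 :=
    prod_eq_one fun i _ => by simp [sum_eq_zero_iff.mp hx i (mem_univ i)]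
  rw [coefficient, hnum]
  positivity

variable {m : ℕ}

def terms (k m : ℕ) : Finset ((Fin (k + 1) → Fin (m + 1)) × (Fin k → Fin (m + 1))) :=
  univ.filter fun p => (∑ i, (p.1 i : ℕ)) + ∑ j, (p.2 j : ℕ) = m

noncomputable def termExponent (p : (Fin (k + 1) → Fin (m + 1)) × (Fin k → Fin (m + 1))) :
    Fin k ⊕ Fin k →₀ ℕ :=
  exponent (fun i => (p.1 i : ℕ)) (fun j => (p.2 j : ℕ))

noncomputable def termCoefficient (p : (Fin (k + 1) → Fin (m + 1)) × (Fin k → Fin (m + 1))) :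
    ℚ :=
  coefficient (fun i => (p.1 i : ℕ)) (fun j => (p.2 j : ℕ))

variable {p : (Fin (k + 1) → Fin (m + 1)) × (Fin k → Fin (m + 1))}

theorem degree_termExponent (hp : p ∈ terms k m) :
    (termExponent p).sum (fun _ e => e) = k * m + ∑ j, (p.2 j : ℕ) := by
  rw [termExponent, degree_exponent, (mem_filter.mp hp).2]

theorem degree_termExponent_bounds (hp : p ∈ terms k m) :
    k * m ≤ (termExponent p).sum (fun _ e => e) ∧
      (termExponent p).sum (fun _ e => e) ≤ (k + 1) * m := by
  have hm := (mem_filter.mp hp).2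
  rw [degree_termExponent hp, add_mul, one_mul]
  omega

theorem termCoefficient_pos (hp : p ∈ terms k m)
    (htop : (termExponent p).sum (fun _ e => e) = (k + 1) * m) : 0 < termCoefficient p := by
  have hm := (mem_filter.mp hp).2
  rw [degree_termExponent hp, add_mul, one_mul] at htop
  exact coefficient_pos _ _ (by omega)

theorem exists_mem_terms_degree_termExponent_eq (hk : 1 ≤ k) :
    ∃ p ∈ terms k m, (termExponent p).sum (fun _ e => e) = (k + 1) * m := by
  have hy : ∑ j : Fin k, ((Pi.single ⟨0, hk⟩ (Fin.last m) : Fin k → Fin (m + 1)) j : ℕ) = m := by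
    simp [Pi.single_apply, apply_ite Fin.val]
  have hp₀ : ((0, Pi.single ⟨0, hk⟩ (Fin.last m)) :
      (Fin (k + 1) → Fin (m + 1)) × (Fin k → Fin (m + 1))) ∈ terms k m :=
    mem_filter.mpr ⟨mem_univ _, by simpa using hy⟩
  refine ⟨_, hp₀, ?_⟩
  rw [degree_termExponent hp₀, hy, add_mul, one_mul]

end Sylvester

/-- Degree of Sylvester sums as polynomials: the summation part `Q` of the Bernoulli-number
formula for `S_{m-1}(A,B)`, viewed as a polynomial in the `2k` variables
`a₁,…,a_k,b₁,…,b_k` (the `aᵢ` are the `Sum.inl` variables and the `bᵢ` the `Sum.inr`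
variables), has every monomial of total degree between `km` and `(k+1)m`, the full
polynomial `(m!/m)·Q − B_m/m` has total degree `(k+1)m` (so `S_{m-1}` has total degree
`((m-1)+1)(k+1)`), and the coefficient of every top-degree monomial is positive. -/
theorem sylvester_polynomial_degree (k m : ℕ) (hk : 1 ≤ k) (hm : 1 ≤ m)
    (Q : MvPolynomial (Fin k ⊕ Fin k) ℚ)
    (hQ : Q = ∑ p ∈ (Finset.univ :
          Finset ((Fin (k + 1) → Fin (m + 1)) × (Fin k → Fin (m + 1)))).filter
            (fun p => (∑ i : Fin (k + 1), ((p.1 i : ℕ))) + (∑ j : Fin k, ((p.2 j : ℕ))) = m),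
        MvPolynomial.C
            ((∏ i : Fin (k + 1), bernoulli (p.1 i : ℕ) / ((p.1 i : ℕ).factorial : ℚ)) /
              (∏ j : Fin k, (((p.2 j : ℕ) + 1).factorial : ℚ))) *
          ∏ i : Fin k,
            MvPolynomial.X (Sum.inl i) ^
                ((∑ l ∈ Finset.univ.filter (fun l : Fin (k + 1) => (l : ℕ) ≤ (i : ℕ)),
                    (p.1 l : ℕ)) +
                  ∑ l ∈ Finset.univ.filter (fun l : Fin k => (l : ℕ) ≤ (i : ℕ)),
                    (p.2 l : ℕ)) *
              MvPolynomial.X (Sum.inr i) ^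
                ((∑ l ∈ Finset.univ.filter (fun l : Fin (k + 1) => (i : ℕ) < (l : ℕ)),
                    (p.1 l : ℕ)) +
                  ∑ l ∈ Finset.univ.filter (fun l : Fin k => (i : ℕ) ≤ (l : ℕ)),
                    (p.2 l : ℕ))) :
    -- every monomial of the summation has degree between km and (k+1)m
    (∀ d ∈ Q.support, k * m ≤ d.sum (fun _ e => e) ∧ d.sum (fun _ e => e) ≤ (k + 1) * m) ∧
    -- the full polynomial has total degree (k+1)m
    (MvPolynomial.C ((m.factorial : ℚ) / (m : ℚ)) * Q -
        MvPolynomial.C (bernoulli m / (m : ℚ))).totalDegree = (k + 1) * m ∧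
    -- the top-degree coefficients are positive
    (∀ d ∈ Q.support, d.sum (fun _ e => e) = (k + 1) * m → 0 < Q.coeff d) := by
  classical
  have hQ' : Q = ∑ p ∈ Sylvester.terms k m,
      monomial (Sylvester.termExponent p) (Sylvester.termCoefficient p) := by
    simp_rw [hQ, prod_X_inl_pow_mul_X_inr_pow, C_mul_monomial, mul_one]
    rfl
  have hbounds : ∀ d ∈ Q.support,
      k * m ≤ d.sum (fun _ e => e) ∧ d.sum (fun _ e => e) ≤ (k + 1) * m := by
    intro d hd
    rw [hQ'] at hd
    obtain ⟨p, hp, rfl⟩ := exists_eq_of_mem_support_sum_monomial hd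
    exact Sylvester.degree_termExponent_bounds hp
  have htop : ∀ d : Fin k ⊕ Fin k →₀ ℕ, d.sum (fun _ e => e) = (k + 1) * m →
      (∃ p ∈ Sylvester.terms k m, Sylvester.termExponent p = d) → 0 < Q.coeff d := by
    intro d hd hex
    rw [hQ']
    refine coeff_sum_monomial_pos (fun p hp hpd => ?_) hex
    exact Sylvester.termCoefficient_pos hp (hpd ▸ hd)
  obtain ⟨p₀, hp₀, hp₀top⟩ := Sylvester.exists_mem_terms_degree_termExponent_eq (m := m) hk
  have hQdeg : Q.totalDegree = (k + 1) * m :=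
    le_antisymm (Finset.sup_le fun d hd => (hbounds d hd).2)
      (hp₀top ▸ le_totalDegree (mem_support_iff.mpr (htop _ hp₀top ⟨p₀, hp₀, rfl⟩).ne'))
  refine ⟨hbounds, ?_, fun d hd hdtop => htop d hdtop ?_⟩
  · rw [totalDegree_C_mul_sub_C (by positivity) _ (by rw [hQdeg]; positivity), hQdeg]
  · exact exists_eq_of_mem_support_sum_monomial (hQ' ▸ hd)
end
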